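/- Let {X, S_i, p_i} be a measurable iterated function system on a separable metric space with invariant probability measure μ, and let ν(d(x,ω)) = p_x(dω)μ(dx) be the associated measure on X × Σ. Then μ is ergodic for the iterated function system if and only if ν is ergodic for the skew product S(x,ω) = (S_{ω₁}(x), σω). -/

import Mathlib

/-!
The measure `ν` is `μ ⊗ₘ κ` for the path kernel `κ x = p_x`, and the cylinder formula makes `κ`
Markov: restricted to `{ω 0 = i}` and shifted, `κ x` becomes `p_i(x) • κ (S_i x)`. Hence the skew
product preserves `m ⊗ₘ κ` for every invariant `m`.

If `ν` is ergodic and `μ = t μ₁ + (1 - t) μ₂`, the invariant measures `μⱼ ⊗ₘ κ ≪ ν` equal `ν`,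
and `μⱼ` is their first marginal.

Conversely, for a skew-invariant set `A` the fibre mass `q x = κ x A_x` is a bounded harmonic
function. A variance computation shows that a.e. `q (S_i x) = q x` whenever `p_i(x) ≠ 0`, so
`q μ` and `(1 - q) μ` are invariant measures and extremality forces `q = c` a.e. As the chain
started from `μ` almost surely avoids `μ`-null sets, `κ x` restricted to `A_x` agrees with
`c • κ x` on cylinders for a.e. `x`; hence `c = c²` and `ν A = c ∈ {0, 1}`.
-/

open MeasureTheory Set
open scoped ENNReal NNReal

def iterWord {I X : Type*} (S : I → X → X) : List I → X → X
  | [], x => x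
  | i :: l, x => iterWord S l (S i x)

def wtWord {I X : Type*} (S : I → X → X) (p : I → X → ℝ) : List I → X → ℝ
  | [], _ => 1
  | i :: l, x => p i x * wtWord S p l (S i x)

def cylinder {I : Type*} (l : List I) : Set (ℕ → I) :=
  {ξ | ∀ (k : ℕ) (h : k < l.length), ξ k = l.get ⟨k, h⟩}

/-- The Markov operator kernel of the IFS: `P(x,·) = Σ_i p_i(x) δ_{S_i(x)}`. -/
noncomputable def ifsKernel {I X : Type*} [Fintype I] [MeasurableSpace X]
    (S : I → X → X) (p : I → X → ℝ) (x : X) : Measure X :=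
  ∑ i : I, ENNReal.ofReal (p i x) • Measure.dirac (S i x)

open ProbabilityTheory

namespace IFS

variable {I : Type*}

def shift (ω : ℕ → I) : ℕ → I := fun n => ω (n + 1)

lemma measurable_shift [MeasurableSpace I] : Measurable (shift (I := I)) :=
  measurable_pi_lambda _ fun n => measurable_pi_apply (n + 1)

@[simp] lemma cylinder_nil : cylinder ([] : List I) = univ := by
  ext ω; simp [_root_.cylinder]

lemma mem_cylinder_cons {i : I} {l : List I} {ω : ℕ → I} :
    ω ∈ cylinder (i :: l) ↔ ω 0 = i ∧ shift ω ∈ cylinder l := by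
  simp only [_root_.cylinder, mem_ofPred_eq, List.length_cons, List.get_eq_getElem, shift]
  constructor
  · intro h
    exact ⟨h 0 (by simp), fun k hk => h (k + 1) (by omega)⟩
  · rintro ⟨h0, h⟩ (_ | k) hk
    · simpa using h0
    · simpa using h k (by omega)

lemma measurableSet_cylinder [MeasurableSpace I] [MeasurableSingletonClass I] (l : List I) :
    MeasurableSet (cylinder l) := by
  have : cylinder l = ⋂ k : Fin l.length, (fun ω : ℕ → I => ω k) ⁻¹' {l.get k} := by
    ext ω
    simp only [_root_.cylinder, mem_ofPred_eq, mem_iInter, mem_preimage, mem_singleton_iff]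
    exact ⟨fun h k => h k k.2, fun h k hk => h ⟨k, hk⟩⟩
  rw [this]
  exact .iInter fun k => measurable_pi_apply _ (measurableSet_singleton _)

lemma measurableSet_eval_zero_eq [MeasurableSpace I] [MeasurableSingletonClass I] (i : I) :
    MeasurableSet {ω : ℕ → I | ω 0 = i} := by
  have : MeasurableSet ((fun ω : ℕ → I => ω 0) ⁻¹' {i}) :=
    measurable_pi_apply 0 (measurableSet_singleton i)
  exact this

lemma measure_eq_sum_inter_eval_zero_eq [Fintype I] [MeasurableSpace I]
    [MeasurableSingletonClass I] (ρ : Measure (ℕ → I)) (E : Set (ℕ → I)) :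
    ρ E = ∑ i, ρ ({ω | ω 0 = i} ∩ E) := by
  have := sum_measure_preimage_singleton (μ := ρ.restrict E) Finset.univ
    (f := fun ω : ℕ → I => ω 0) fun i _ => measurableSet_eval_zero_eq i
  simp only [Finset.coe_univ, preimage_univ, Measure.restrict_apply_univ] at this
  rw [← this]
  exact Finset.sum_congr rfl fun i _ => Measure.restrict_apply (measurableSet_eval_zero_eq i)

lemma preimage_frestrictLe_singleton (n : ℕ) (y : Finset.Iic n → I) :
    Preorder.frestrictLe n ⁻¹' ({y} : Set (Finset.Iic n → I)) =
      cylinder (List.ofFn fun k : Fin (n + 1) => y ⟨k, by simp [Nat.lt_succ_iff.1 k.2]⟩) := by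
  ext ω
  simp only [mem_preimage, mem_singleton_iff, _root_.cylinder, mem_ofPred_eq, List.length_ofFn,
    List.get_eq_getElem, List.getElem_ofFn, funext_iff, Preorder.frestrictLe_apply,
    Subtype.forall, Finset.mem_Iic]
  exact ⟨fun h k hk => h k (by omega), fun h k hk => h k (by omega)⟩

lemma ext_of_cylinder [Countable I] [MeasurableSpace I] [MeasurableSingletonClass I]
    {ρ₁ ρ₂ : Measure (ℕ → I)} [IsFiniteMeasure ρ₁]
    (h : ∀ l : List I, ρ₁ (cylinder l) = ρ₂ (cylinder l)) : ρ₁ = ρ₂ := by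
  have hmap (n : ℕ) : ρ₁.map (Preorder.frestrictLe n) = ρ₂.map (Preorder.frestrictLe n) :=
    Measure.ext_of_singleton fun y => by
      rw [Measure.map_apply (Preorder.measurable_frestrictLe n) (measurableSet_singleton y),
        Measure.map_apply (Preorder.measurable_frestrictLe n) (measurableSet_singleton y),
        preimage_frestrictLe_singleton, h]
  refine ext_of_generate_finite _ generateFrom_measurableCylinders.symm
    isPiSystem_measurableCylinders ?_ (by simpa using h [])
  rw [measurableCylinders_nat]
  simp only [mem_iUnion, mem_singleton_iff]
  rintro _ ⟨n, S, hS, rfl⟩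
  change ρ₁ (Preorder.frestrictLe n ⁻¹' S) = ρ₂ (Preorder.frestrictLe n ⁻¹' S)
  rw [← Measure.map_apply (Preorder.measurable_frestrictLe n) hS,
    ← Measure.map_apply (Preorder.measurable_frestrictLe n) hS, hmap n]

section Markov

variable {X : Type*} [MeasurableSpace X] {S : I → X → X} {p : I → X → ℝ}

lemma measurable_iterWord (hS : ∀ i, Measurable (S i)) : ∀ l : List I, Measurable (iterWord S l)
  | [] => measurable_id
  | i :: l => (measurable_iterWord hS l).comp (hS i)

lemma measurable_wtWord (hS : ∀ i, Measurable (S i)) (hp : ∀ i, Measurable (p i)) :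
    ∀ l : List I, Measurable (wtWord S p l)
  | [] => measurable_const
  | i :: l => (hp i).mul ((measurable_wtWord hS hp l).comp (hS i))

variable [Fintype I]

lemma ifsKernel_apply {B : Set X} (hB : MeasurableSet B) (x : X) :
    ifsKernel S p x B = ∑ i, ENNReal.ofReal (p i x) * B.indicator 1 (S i x) := by
  simp only [ifsKernel, Measure.coe_finsetSum, Finset.sum_apply, Measure.smul_apply,
    smul_eq_mul, Measure.dirac_apply' _ hB]

lemma lintegral_ifsKernel {h : X → ℝ≥0∞} (hh : Measurable h) (x : X) :
    ∫⁻ y, h y ∂(ifsKernel S p x) = ∑ i, ENNReal.ofReal (p i x) * h (S i x) := by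
  simp only [ifsKernel, lintegral_finsetSum_measure, lintegral_smul_measure,
    lintegral_dirac' _ hh, smul_eq_mul]

lemma measurable_ifsKernel (hS : ∀ i, Measurable (S i)) (hp : ∀ i, Measurable (p i)) :
    Measurable (ifsKernel S p) :=
  Measure.measurable_of_measurable_coe _ fun B hB => by
    simp only [ifsKernel_apply hB]
    exact Finset.measurable_sum _ fun i _ =>
      (hp i).ennreal_ofReal.mul ((measurable_one.indicator hB).comp (hS i))

variable {m : Measure X}

lemma lintegral_sum_comp_of_bind_eq (hS : ∀ i, Measurable (S i)) (hp : ∀ i, Measurable (p i))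
    (hm : m.bind (ifsKernel S p) = m) {h : X → ℝ≥0∞} (hh : Measurable h) :
    ∫⁻ x, ∑ i, ENNReal.ofReal (p i x) * h (S i x) ∂m = ∫⁻ x, h x ∂m := by
  conv_rhs => rw [← hm]
  rw [Measure.lintegral_bind (measurable_ifsKernel hS hp).aemeasurable hh.aemeasurable]
  simp only [lintegral_ifsKernel hh]

lemma ae_comp_mem_of_ae_mem (hS : ∀ i, Measurable (S i)) (hp : ∀ i, Measurable (p i))
    (hp0 : ∀ i x, 0 ≤ p i x) (hm : m.bind (ifsKernel S p) = m) {s : Set X}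
    (hs : MeasurableSet s) (h : ∀ᵐ x ∂m, x ∈ s) :
    ∀ᵐ x ∂m, ∀ i, p i x ≠ 0 → S i x ∈ s := by
  have hzero : ∫⁻ x, ∑ i, ENNReal.ofReal (p i x) * sᶜ.indicator 1 (S i x) ∂m = 0 := by
    rw [lintegral_sum_comp_of_bind_eq hS hp hm (measurable_one.indicator hs.compl),
      lintegral_indicator_one hs.compl]
    exact ae_iff.1 h
  have hmeas : Measurable fun x => ∑ i, ENNReal.ofReal (p i x) * sᶜ.indicator 1 (S i x) :=
    Finset.measurable_sum _ fun i _ =>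
      (hp i).ennreal_ofReal.mul ((measurable_one.indicator hs.compl).comp (hS i))
  filter_upwards [(lintegral_eq_zero_iff hmeas).1 hzero] with x hx i hpi
  by_contra hxs
  have := Finset.sum_eq_zero_iff.1 hx i (Finset.mem_univ i)
  simp only [indicator_of_mem (mem_compl hxs), Pi.one_apply, mul_one,
    ENNReal.ofReal_eq_zero] at this
  exact hpi (le_antisymm this (hp0 i x))

lemma ae_iterWord_mem_of_ae_mem (hS : ∀ i, Measurable (S i)) (hp : ∀ i, Measurable (p i))
    (hp0 : ∀ i x, 0 ≤ p i x) (hm : m.bind (ifsKernel S p) = m) {s : Set X}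
    (hs : MeasurableSet s) (h : ∀ᵐ x ∂m, x ∈ s) :
    ∀ l : List I, ∀ᵐ x ∂m, wtWord S p l x ≠ 0 → iterWord S l x ∈ s
  | [] => h.mono fun x hx _ => hx
  | i :: l => by
    have hs' : MeasurableSet {y | wtWord S p l y ≠ 0 → iterWord S l y ∈ s} :=
      (measurable_wtWord hS hp l (measurableSet_singleton 0)).compl.imp
        (measurable_iterWord hS l hs)
    filter_upwards [ae_comp_mem_of_ae_mem hS hp hp0 hm hs'
      (ae_iterWord_mem_of_ae_mem hS hp hp0 hm hs h l)] with x hx hw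
    have hw : p i x * wtWord S p l (S i x) ≠ 0 := hw
    exact hx i (left_ne_zero_of_mul hw) (right_ne_zero_of_mul hw)

lemma sum_mul_sq_eq_sq_add_sum_mul_sub_sq {ι : Type*} (s : Finset ι) (w a : ι → ℝ) (b : ℝ)
    (hw : ∑ i ∈ s, w i = 1) (hb : ∑ i ∈ s, w i * a i = b) :
    ∑ i ∈ s, w i * a i ^ 2 = b ^ 2 + ∑ i ∈ s, w i * (a i - b) ^ 2 := by
  have : ∀ i ∈ s, w i * (a i - b) ^ 2 = w i * a i ^ 2 - 2 * b * (w i * a i) + b ^ 2 * w i :=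
    fun i _ => by ring
  rw [Finset.sum_congr rfl this, Finset.sum_add_distrib, Finset.sum_sub_distrib,
    ← Finset.mul_sum, ← Finset.mul_sum, hw, hb]
  ring

lemma ae_comp_eq_of_harmonic (hS : ∀ i, Measurable (S i)) (hp : ∀ i, Measurable (p i))
    (hp0 : ∀ i x, 0 ≤ p i x) (hp1 : ∀ x, ∑ i, p i x = 1) [IsFiniteMeasure m]
    (hm : m.bind (ifsKernel S p) = m) {g : X → ℝ} (hg : Measurable g) {C : ℝ}
    (hC : ∀ x, |g x| ≤ C) (hharm : ∀ x, ∑ i, p i x * g (S i x) = g x) :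
    ∀ᵐ x ∂m, ∀ i, p i x ≠ 0 → g (S i x) = g x := by
  -- Integrating `P(g²) = g² + F` against the invariant `m` forces `∫ F = 0`.
  set F : X → ℝ := fun x => ∑ i, p i x * (g (S i x) - g x) ^ 2
  have hF0 (x : X) : 0 ≤ F x := Finset.sum_nonneg fun i _ => mul_nonneg (hp0 i x) (sq_nonneg _)
  have hpt (x : X) : ∑ i, ENNReal.ofReal (p i x) * ENNReal.ofReal (g (S i x) ^ 2) =
      ENNReal.ofReal (g x ^ 2) + ENNReal.ofReal (F x) := by
    simp_rw [← ENNReal.ofReal_mul (hp0 _ x)]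
    rw [← ENNReal.ofReal_sum_of_nonneg fun i _ => mul_nonneg (hp0 i x) (sq_nonneg _),
      ← ENNReal.ofReal_add (sq_nonneg _) (hF0 x),
      sum_mul_sq_eq_sq_add_sum_mul_sub_sq _ _ _ _ (hp1 x) (hharm x)]
  have hsq_fin : ∫⁻ x, ENNReal.ofReal (g x ^ 2) ∂m ≠ ∞ :=
    (Integrable.of_bound (hg.pow_const 2).aestronglyMeasurable (C ^ 2)
      (ae_of_all _ fun x => by
        simpa [Real.norm_eq_abs, abs_pow] using pow_le_pow_left₀ (abs_nonneg _) (hC x) 2)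
      ).lintegral_lt_top.ne
  have hF_zero : ∫⁻ x, ENNReal.ofReal (F x) ∂m = 0 := by
    have := lintegral_sum_comp_of_bind_eq hS hp hm (hg.pow_const 2).ennreal_ofReal
    simp_rw [hpt] at this
    rw [lintegral_add_left (hg.pow_const 2).ennreal_ofReal] at this
    exact (ENNReal.add_right_inj hsq_fin).1 (this.trans (add_zero _).symm)
  have hFmeas : Measurable F := Finset.measurable_sum _ fun i _ =>
    (hp i).mul (((hg.comp (hS i)).sub hg).pow_const 2)
  filter_upwards [(lintegral_eq_zero_iff hFmeas.ennreal_ofReal).1 hF_zero] with x hx i hpi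
  have hFx : F x = 0 := le_antisymm (ENNReal.ofReal_eq_zero.1 hx) (hF0 x)
  have := (Finset.sum_eq_zero_iff_of_nonneg fun j _ =>
    mul_nonneg (hp0 j x) (sq_nonneg _)).1 hFx i (Finset.mem_univ i)
  simpa [hpi, sub_eq_zero] using this

lemma withDensity_bind_eq (hS : ∀ i, Measurable (S i)) (hp : ∀ i, Measurable (p i))
    (hm : m.bind (ifsKernel S p) = m) {q : X → ℝ≥0∞} (hq : Measurable q)
    (hloc : ∀ᵐ x ∂m, ∀ i, p i x ≠ 0 → q (S i x) = q x) :
    (m.withDensity q).bind (ifsKernel S p) = m.withDensity q := by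
  ext B hB
  rw [Measure.bind_apply hB (measurable_ifsKernel hS hp).aemeasurable,
    lintegral_withDensity_eq_lintegral_mul _ hq (g := fun x => ifsKernel S p x B)
      ((Measure.measurable_coe hB).comp (measurable_ifsKernel hS hp)),
    withDensity_apply _ hB, ← lintegral_indicator hB,
    ← lintegral_sum_comp_of_bind_eq hS hp hm (hq.indicator hB)]
  refine lintegral_congr_ae ?_
  filter_upwards [hloc] with x hx
  simp only [Pi.mul_apply, ifsKernel_apply hB, Finset.mul_sum]
  refine Finset.sum_congr rfl fun i _ => ?_
  by_cases hpi : p i x = 0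
  · simp [hpi]
  · by_cases hB : S i x ∈ B <;> simp [hB, hx i hpi, mul_comm]

end Markov

section Extreme

variable {X : Type*} [MeasurableSpace X]

def IsExtremeInvariant (K : X → Measure X) (μ : Measure X) : Prop :=
  ∀ (μ₁ μ₂ : Measure X) (t : ℝ≥0), IsProbabilityMeasure μ₁ → μ₁.bind K = μ₁ →
    IsProbabilityMeasure μ₂ → μ₂.bind K = μ₂ → 0 < t → t < 1 →
    μ = (t : ℝ≥0∞) • μ₁ + ((1 - t : ℝ≥0) : ℝ≥0∞) • μ₂ → μ₁ = μ₂

lemma IsExtremeInvariant.eq_smul_of_add_eq {K : X → Measure X} {μ ν₁ ν₂ : Measure X}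
    [IsProbabilityMeasure μ] (hμ : IsExtremeInvariant K μ) (h₁ : ν₁.bind K = ν₁)
    (h₂ : ν₂.bind K = ν₂) (hadd : ν₁ + ν₂ = μ) : ν₁ = ν₁ univ • μ := by
  have hsum : ν₁ univ + ν₂ univ = 1 := by rw [← Measure.add_apply, hadd, measure_univ]
  rcases eq_or_ne (ν₁ univ) 0 with ha | ha
  · rw [ha, zero_smul]
    exact Measure.measure_univ_eq_zero.1 ha
  rcases eq_or_ne (ν₂ univ) 0 with hb | hb
  · rw [Measure.measure_univ_eq_zero.1 hb, add_zero] at hadd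
    subst hadd
    rw [measure_univ, one_smul]
  have ha_top : ν₁ univ ≠ ∞ := ne_top_of_le_ne_top ENNReal.one_ne_top (hsum ▸ le_self_add)
  have hb_top : ν₂ univ ≠ ∞ := ne_top_of_le_ne_top ENNReal.one_ne_top (hsum ▸ le_add_self)
  set t : ℝ≥0 := (ν₁ univ).toNNReal
  have ht : (t : ℝ≥0∞) = ν₁ univ := ENNReal.coe_toNNReal ha_top
  have ht' : ((1 - t : ℝ≥0) : ℝ≥0∞) = ν₂ univ := by
    rw [ENNReal.coe_sub, ENNReal.coe_one, ht, ← hsum, ENNReal.add_sub_cancel_left ha_top]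
  have ht1 : t < 1 := by
    have : (t : ℝ≥0∞) < 1 := ht ▸ hsum ▸ ENNReal.lt_add_right ha_top hb
    exact_mod_cast this
  have hprob {ν : Measure X} (h : ν univ ≠ 0) (h' : ν univ ≠ ∞) :
      IsProbabilityMeasure ((ν univ)⁻¹ • ν) :=
    ⟨by rw [Measure.smul_apply, smul_eq_mul, ENNReal.inv_mul_cancel h h']⟩
  have hdecomp : μ = (t : ℝ≥0∞) • ((ν₁ univ)⁻¹ • ν₁) +
      ((1 - t : ℝ≥0) : ℝ≥0∞) • ((ν₂ univ)⁻¹ • ν₂) := by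
    rw [ht, ht', smul_smul, smul_smul, ENNReal.mul_inv_cancel ha ha_top,
      ENNReal.mul_inv_cancel hb hb_top, one_smul, one_smul, hadd]
  have heq := hμ _ _ t (hprob ha ha_top) (by rw [Measure.bind_smul, h₁]) (hprob hb hb_top)
    (by rw [Measure.bind_smul, h₂]) (ENNReal.toNNReal_pos ha ha_top) ht1 hdecomp
  have hμ₁ : μ = (ν₁ univ)⁻¹ • ν₁ := by
    rw [hdecomp, ← heq, ← add_smul, ht, ht', hsum, one_smul]
  rw [hμ₁, smul_smul, ENNReal.mul_inv_cancel ha ha_top, one_smul]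

lemma IsExtremeInvariant.ae_eq_const_of_harmonic [Fintype I] {S : I → X → X}
    {p : I → X → ℝ} (hS : ∀ i, Measurable (S i)) (hp : ∀ i, Measurable (p i)) (hp0 : ∀ i x, 0 ≤ p i x)
    (hp1 : ∀ x, ∑ i, p i x = 1) {μ : Measure X} [IsProbabilityMeasure μ]
    (hμinv : μ.bind (ifsKernel S p) = μ) (hμ : IsExtremeInvariant (ifsKernel S p) μ)
    {q : X → ℝ≥0∞} (hq : Measurable q) (hq1 : ∀ x, q x ≤ 1)
    (hharm : ∀ x, ∑ i, ENNReal.ofReal (p i x) * q (S i x) = q x) :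
    ∃ c, q =ᵐ[μ] fun _ => c := by
  have hq_top (x : X) : q x ≠ ∞ := ne_top_of_le_ne_top ENNReal.one_ne_top (hq1 x)
  have hharm_real (x : X) : ∑ i, p i x * (q (S i x)).toReal = (q x).toReal := by
    rw [← hharm x,
      ENNReal.toReal_sum fun i _ => ENNReal.mul_ne_top ENNReal.ofReal_ne_top (hq_top _)]
    simp only [ENNReal.toReal_mul, ENNReal.toReal_ofReal (hp0 _ x)]
  have hloc : ∀ᵐ x ∂μ, ∀ i, p i x ≠ 0 → q (S i x) = q x := by
    filter_upwards [ae_comp_eq_of_harmonic hS hp hp0 hp1 hμinv hq.ennreal_toReal (C := 1)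
      (fun x => by simpa using ENNReal.toReal_mono ENNReal.one_ne_top (hq1 x)) hharm_real]
      with x hx i hi
    exact (ENNReal.toReal_eq_toReal_iff' (hq_top _) (hq_top _)).1 (hx i hi)
  have hloc' : ∀ᵐ x ∂μ, ∀ i, p i x ≠ 0 → 1 - q (S i x) = 1 - q x :=
    hloc.mono fun x hx i hi => by rw [hx i hi]
  have hadd : μ.withDensity q + μ.withDensity (fun x => 1 - q x) = μ := by
    have : (q + fun x => 1 - q x) = 1 := funext fun x => add_tsub_cancel_of_le (hq1 x)
    rw [← withDensity_add_left hq, this, withDensity_one]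
  refine ⟨μ.withDensity q univ, (withDensity_eq_iff_of_sigmaFinite hq.aemeasurable
    aemeasurable_const).1 ?_⟩
  rw [withDensity_const]
  exact hμ.eq_smul_of_add_eq (withDensity_bind_eq hS hp hμinv hq hloc)
    (withDensity_bind_eq hS hp hμinv (measurable_const.sub hq) hloc') hadd

end Extreme

section SkewProduct

variable {X : Type*} [MeasurableSpace X] [Fintype I] [MeasurableSpace I]
  [MeasurableSingletonClass I] {S : I → X → X} {p : I → X → ℝ} {κ : Kernel X (ℕ → I)}
  [IsMarkovKernel κ]

variable (S) in
def skew (z : X × (ℕ → I)) : X × (ℕ → I) := (S (z.2 0) z.1, shift z.2)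

lemma measurable_skew (hS : ∀ i, Measurable (S i)) : Measurable (skew S) := by
  have hS' : Measurable fun z : X × (ℕ → I) => S (z.2 0) z.1 :=
    (measurable_from_prod_countable_left (f := fun q : X × I => S q.2 q.1) hS).comp
      (measurable_fst.prodMk ((measurable_pi_apply 0).comp measurable_snd))
  exact hS'.prodMk (measurable_shift.comp measurable_snd)

lemma map_shift_restrict_eval_zero_eq (hp0 : ∀ i x, 0 ≤ p i x)
    (hκ : ∀ x l, κ x (cylinder l) = ENNReal.ofReal (wtWord S p l x)) (x : X) (i : I) :
    ((κ x).restrict {ω | ω 0 = i}).map shift = ENNReal.ofReal (p i x) • κ (S i x) :=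
  ext_of_cylinder fun l => by
    have hset : shift ⁻¹' cylinder l ∩ {ω | ω 0 = i} = cylinder (i :: l) := by
      ext ω; simp [mem_cylinder_cons, and_comm]
    rw [Measure.map_apply measurable_shift (measurableSet_cylinder l),
      Measure.restrict_apply (measurable_shift (measurableSet_cylinder l)), hset,
      Measure.smul_apply, smul_eq_mul, hκ, hκ, ← ENNReal.ofReal_mul (hp0 i x)]
    rfl

lemma measure_inter_preimage_skew (hp0 : ∀ i x, 0 ≤ p i x)
    (hκ : ∀ x l, κ x (cylinder l) = ENNReal.ofReal (wtWord S p l x))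
    {B : Set (X × (ℕ → I))} (hB : MeasurableSet B) (x : X) (i : I) :
    κ x ({ω | ω 0 = i} ∩ Prod.mk x ⁻¹' (skew S ⁻¹' B)) =
      ENNReal.ofReal (p i x) * κ (S i x) (Prod.mk (S i x) ⁻¹' B) := by
  have hset : {ω | ω 0 = i} ∩ Prod.mk x ⁻¹' (skew S ⁻¹' B) =
      shift ⁻¹' (Prod.mk (S i x) ⁻¹' B) ∩ {ω | ω 0 = i} := by
    ext ω
    simp only [mem_inter_iff, mem_ofPred_eq, mem_preimage, skew]
    constructor
    · rintro ⟨rfl, h⟩; exact ⟨h, rfl⟩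
    · rintro ⟨h, rfl⟩; exact ⟨rfl, h⟩
  have hB' : MeasurableSet (Prod.mk (S i x) ⁻¹' B) := measurable_prodMk_left hB
  rw [hset, ← Measure.restrict_apply (measurable_shift hB'),
    ← Measure.map_apply measurable_shift hB', map_shift_restrict_eval_zero_eq hp0 hκ,
    Measure.smul_apply, smul_eq_mul]

lemma measure_preimage_skew (hp0 : ∀ i x, 0 ≤ p i x)
    (hκ : ∀ x l, κ x (cylinder l) = ENNReal.ofReal (wtWord S p l x))
    {B : Set (X × (ℕ → I))} (hB : MeasurableSet B) (x : X) :
    κ x (Prod.mk x ⁻¹' (skew S ⁻¹' B)) =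
      ∑ i, ENNReal.ofReal (p i x) * κ (S i x) (Prod.mk (S i x) ⁻¹' B) := by
  rw [measure_eq_sum_inter_eval_zero_eq]
  simp only [measure_inter_preimage_skew hp0 hκ hB]

lemma measurePreserving_skew (hS : ∀ i, Measurable (S i)) (hp : ∀ i, Measurable (p i))
    (hp0 : ∀ i x, 0 ≤ p i x) (hκ : ∀ x l, κ x (cylinder l) = ENNReal.ofReal (wtWord S p l x))
    {m : Measure X} [SFinite m] (hm : m.bind (ifsKernel S p) = m) :
    MeasurePreserving (skew S) (m ⊗ₘ κ) (m ⊗ₘ κ) := by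
  refine ⟨measurable_skew hS, Measure.ext fun B hB => ?_⟩
  rw [Measure.map_apply (measurable_skew hS) hB, Measure.compProd_apply (measurable_skew hS hB),
    Measure.compProd_apply hB]
  simp_rw [measure_preimage_skew hp0 hκ hB]
  exact lintegral_sum_comp_of_bind_eq hS hp hm (Kernel.measurable_kernel_prodMk_left hB)

lemma measure_cylinder_inter_fiber (hp0 : ∀ i x, 0 ≤ p i x)
    (hκ : ∀ x l, κ x (cylinder l) = ENNReal.ofReal (wtWord S p l x))
    {A : Set (X × (ℕ → I))} (hA : MeasurableSet A) (hAinv : skew S ⁻¹' A = A) :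
    ∀ (l : List I) (x : X), κ x (cylinder l ∩ Prod.mk x ⁻¹' A) =
      ENNReal.ofReal (wtWord S p l x) * κ (iterWord S l x) (Prod.mk (iterWord S l x) ⁻¹' A)
  | [], x => by simp [wtWord, iterWord]
  | i :: l, x => by
    have hset : cylinder (i :: l) ∩ Prod.mk x ⁻¹' A =
        {ω | ω 0 = i} ∩ Prod.mk x ⁻¹' (skew S ⁻¹' (univ ×ˢ cylinder l ∩ A)) := by
      conv_lhs => rw [← hAinv]
      ext ω
      simp only [mem_inter_iff, mem_cylinder_cons, mem_preimage, skew, mem_prod, mem_univ,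
        true_and, mem_ofPred_eq]
      tauto
    rw [hset, measure_inter_preimage_skew hp0 hκ
      ((MeasurableSet.univ.prod (measurableSet_cylinder l)).inter hA)]
    have := measure_cylinder_inter_fiber hp0 hκ hA hAinv l (S i x)
    simp only [preimage_inter, mk_preimage_prod_right (mem_univ _)] at this ⊢
    rw [this, ← mul_assoc, ← ENNReal.ofReal_mul (hp0 i x)]
    rfl

lemma eq_zero_or_one_of_ae_measure_fiber_eq (hS : ∀ i, Measurable (S i))
    (hp : ∀ i, Measurable (p i)) (hp0 : ∀ i x, 0 ≤ p i x)
    (hκ : ∀ x l, κ x (cylinder l) = ENNReal.ofReal (wtWord S p l x))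
    {μ : Measure X} [IsProbabilityMeasure μ] (hμinv : μ.bind (ifsKernel S p) = μ)
    {A : Set (X × (ℕ → I))} (hA : MeasurableSet A) (hAinv : skew S ⁻¹' A = A) {c : ℝ≥0∞}
    (hc : ∀ᵐ x ∂μ, κ x (Prod.mk x ⁻¹' A) = c) : c = 0 ∨ c = 1 := by
  have hs : MeasurableSet {y | κ y (Prod.mk y ⁻¹' A) = c} :=
    Kernel.measurable_kernel_prodMk_left hA (measurableSet_singleton c)
  have hcyl : ∀ᵐ x ∂μ, ∀ l, κ x (cylinder l ∩ Prod.mk x ⁻¹' A) = c * κ x (cylinder l) := by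
    rw [ae_all_iff]
    intro l
    filter_upwards [ae_iterWord_mem_of_ae_mem hS hp hp0 hμinv hs hc l] with x hx
    rw [measure_cylinder_inter_fiber hp0 hκ hA hAinv, hκ]
    by_cases hw : wtWord S p l x = 0
    · simp [hw]
    · rw [hx hw, mul_comm]
  -- On a typical fibre, `κ x` restricted to `A` is `c • κ x`; evaluating at `A` gives `c = c²`.
  obtain ⟨x, hx_cyl, hx_c⟩ := (hcyl.and hc).exists
  have hrestrict : (κ x).restrict (Prod.mk x ⁻¹' A) = c • κ x :=
    ext_of_cylinder fun l => by
      rw [Measure.restrict_apply (measurableSet_cylinder l), Measure.smul_apply, smul_eq_mul,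
        hx_cyl l]
  have hcc : c * c = c * 1 := by
    simpa [Measure.restrict_apply_self, hx_c] using congr($hrestrict (Prod.mk x ⁻¹' A)).symm
  rcases eq_or_ne c 0 with h | h
  · exact .inl h
  · exact .inr ((ENNReal.mul_right_inj h (hx_c ▸ measure_ne_top _ _)).1 hcc)

lemma ergodic_skew_of_isExtremeInvariant (hS : ∀ i, Measurable (S i))
    (hp : ∀ i, Measurable (p i)) (hp0 : ∀ i x, 0 ≤ p i x) (hp1 : ∀ x, ∑ i, p i x = 1)
    (hκ : ∀ x l, κ x (cylinder l) = ENNReal.ofReal (wtWord S p l x))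
    {μ : Measure X} [IsProbabilityMeasure μ] (hμinv : μ.bind (ifsKernel S p) = μ)
    (hμ : IsExtremeInvariant (ifsKernel S p) μ) : Ergodic (skew S) (μ ⊗ₘ κ) := by
  refine ⟨measurePreserving_skew hS hp hp0 hκ hμinv, ⟨fun A hA hAinv => ?_⟩⟩
  have hharm (x : X) : ∑ i, ENNReal.ofReal (p i x) * κ (S i x) (Prod.mk (S i x) ⁻¹' A) =
      κ x (Prod.mk x ⁻¹' A) := by
    rw [← measure_preimage_skew hp0 hκ hA, hAinv]
  obtain ⟨c, hc⟩ := hμ.ae_eq_const_of_harmonic hS hp hp0 hp1 hμinv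
    (Kernel.measurable_kernel_prodMk_left hA) (fun _ => prob_le_one) hharm
  have hνA : (μ ⊗ₘ κ) A = c := by
    rw [Measure.compProd_apply hA, lintegral_congr_ae hc, lintegral_const, measure_univ, mul_one]
  rw [Filter.eventuallyConst_set', ae_eq_empty, ae_eq_univ, prob_compl_eq_zero_iff hA, hνA]
  exact eq_zero_or_one_of_ae_measure_fiber_eq hS hp hp0 hκ hμinv hA hAinv hc

lemma isExtremeInvariant_of_ergodic_skew (hS : ∀ i, Measurable (S i))
    (hp : ∀ i, Measurable (p i)) (hp0 : ∀ i x, 0 ≤ p i x)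
    (hκ : ∀ x l, κ x (cylinder l) = ENNReal.ofReal (wtWord S p l x))
    {μ : Measure X} [IsProbabilityMeasure μ] (h : Ergodic (skew S) (μ ⊗ₘ κ)) :
    IsExtremeInvariant (ifsKernel S p) μ := by
  intro μ₁ μ₂ t _ h₁ _ h₂ ht0 ht1 hμ
  have hdecomp : μ ⊗ₘ κ = (t : ℝ≥0∞) • (μ₁ ⊗ₘ κ) + ((1 - t : ℝ≥0) : ℝ≥0∞) • (μ₂ ⊗ₘ κ) := by
    rw [hμ, Measure.compProd_add_left, Measure.compProd_smul_left, Measure.compProd_smul_left]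
  have ht : (t : ℝ≥0∞) ≠ 0 := by exact_mod_cast ht0.ne'
  have ht' : ((1 - t : ℝ≥0) : ℝ≥0∞) ≠ 0 := by exact_mod_cast (tsub_pos_of_lt ht1).ne'
  have hν₁ : μ₁ ⊗ₘ κ = μ ⊗ₘ κ := h.eq_of_absolutelyContinuous
    (measurePreserving_skew hS hp hp0 hκ h₁)
    (hdecomp ▸ (Measure.absolutelyContinuous_smul ht).add_right _)
  have hν₂ : μ₂ ⊗ₘ κ = μ ⊗ₘ κ := h.eq_of_absolutelyContinuous
    (measurePreserving_skew hS hp hp0 hκ h₂)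
    (hdecomp ▸ (Measure.absolutelyContinuous_smul ht').add_right' _)
  rw [← Measure.fst_compProd μ₁ κ, ← Measure.fst_compProd μ₂ κ, hν₁, hν₂]

end SkewProduct

end IFS

theorem stmt8 {X I : Type*}
    [MeasurableSpace X]
    [Fintype I] [MeasurableSpace I] [MeasurableSingletonClass I]
    (S : I → X → X) (hS : ∀ i, Measurable (S i))
    (p : I → X → ℝ) (hp : ∀ i, Measurable (p i))
    (hp0 : ∀ i x, 0 ≤ p i x) (hp1 : ∀ x, ∑ i : I, p i x = 1)
    (μ : Measure X) [IsProbabilityMeasure μ] (hμinv : μ.bind (ifsKernel S p) = μ)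
    (px : X → Measure (ℕ → I)) (hpxprob : ∀ x, IsProbabilityMeasure (px x))
    (hpxmeas : Measurable px)
    (hpxcyl : ∀ (x : X) (l : List I), px x (cylinder l) = ENNReal.ofReal (wtWord S p l x))
    (ν : Measure (X × (ℕ → I)))
    (hν : ∀ A : Set (X × (ℕ → I)), MeasurableSet A →
      ν A = ∫⁻ x, px x {ω | (x, ω) ∈ A} ∂μ) :
    (∀ (μ₁ μ₂ : Measure X) (t : ℝ≥0), IsProbabilityMeasure μ₁ →
        μ₁.bind (ifsKernel S p) = μ₁ → IsProbabilityMeasure μ₂ →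
        μ₂.bind (ifsKernel S p) = μ₂ → 0 < t → t < 1 →
        μ = (t : ℝ≥0∞) • μ₁ + ((1 - t : ℝ≥0) : ℝ≥0∞) • μ₂ → μ₁ = μ₂) ↔
      Ergodic (fun z : X × (ℕ → I) => (S (z.2 0) z.1, fun n => z.2 (n + 1))) ν := by
  let κ : Kernel X (ℕ → I) := ⟨px, hpxmeas⟩
  have : IsMarkovKernel κ := ⟨hpxprob⟩
  obtain rfl : ν = μ ⊗ₘ κ := Measure.ext fun A hA => by
    rw [hν A hA, Measure.compProd_apply hA]
    rfl
  exact ⟨IFS.ergodic_skew_of_isExtremeInvariant hS hp hp0 hp1 hpxcyl hμinv,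
    IFS.isExtremeInvariant_of_ergodic_skew hS hp hp0 hpxcyl⟩
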